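/- Let μ ∈ (1,2), let x₀ ∈ [0,1) and ε > 0 with [x₀ − ε, x₀ + ε] ⊆ [0,1), and let λ denote Lebesgue measure. Let y ∈ [x₀ − ε, x₀ + ε], write γ^{i+1}(y) = b_1⋯b_{i+1}, and suppose {f^i(y') : y' ∈ [x₀ − ε, x₀ + ε], γ^i(y') = γ^i(y)} = T(γ^i(y)). Then λ({x' ∈ [x₀ − ε, x₀ + ε] : γ^{i+1}(x') = b_1⋯b_{i+1}}) · μ · |T(b_1⋯b_i)| = λ({x' ∈ [x₀ − ε, x₀ + ε] : γ^i(x') = b_1⋯b_i}) · |T(b_1⋯b_{i+1})|, where |T(w)| denotes the length of the interval T(w). -/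

import Mathlib

open Set MeasureTheory

/-- The tent map `f(x) = μx` for `x ≤ 1/2` and `μ(1-x)` for `x ≥ 1/2`. -/
noncomputable def tentMap (μ : ℝ) (x : ℝ) : ℝ :=
  if x ≤ 1/2 then μ * x else μ * (1 - x)

/-- `tentBit μ x k` is the `(k+1)`-st bit `b_{k+1}` of the tent code of `x`. -/
noncomputable def tentBit (μ x : ℝ) : ℕ → Bool
  | 0 => if 1/2 ≤ x then true else false
  | k + 1 =>
    if (tentMap μ)^[k+1] x < 1/2 then tentBit μ x k
    else if 1/2 < (tentMap μ)^[k+1] x then !(tentBit μ x k)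
    else true

/-- The tent code `γ^n(x) = b_1 ⋯ b_n`. -/
noncomputable def tentCode (μ : ℝ) (n : ℕ) (x : ℝ) : List Bool :=
  (List.range n).map (tentBit μ x)

/-- The tent language `L_n = {γ^n(x) : x ∈ [0,1)}`. -/
def tentLang (μ : ℝ) (n : ℕ) : Set (List Bool) :=
  {w | ∃ x ∈ Set.Ico (0:ℝ) 1, tentCode μ n x = w}

/-- The segment-type `T(w) = {f^n(x) : x ∈ [0,1), γ^n(x) = w}`. -/
def segType (μ : ℝ) (n : ℕ) (w : List Bool) : Set ℝ :=
  {y | ∃ x ∈ Set.Ico (0:ℝ) 1, tentCode μ n x = w ∧ (tentMap μ)^[n] x = y}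

/-- The set of segment-types `𝒯_n = {T(w) : w ∈ L_n}`. -/
def typeSet (μ : ℝ) (n : ℕ) : Set (Set ℝ) :=
  {S | ∃ w ∈ tentLang μ n, segType μ n w = S}

/-- `I_i = T(γ^i(1/2))`. -/
noncomputable def Iseg (μ : ℝ) (i : ℕ) : Set ℝ :=
  segType μ i (tentCode μ i (1/2))

/-- `Ī_i = T(c̄_i)` where `c̄_i` is the bitwise complement of `γ^i(1/2)`. -/
noncomputable def Isegbar (μ : ℝ) (i : ℕ) : Set ℝ :=
  segType μ i ((tentCode μ i (1/2)).map (fun b => !b))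

/-- The length of the interval `T(w)` (zero if `T(w)` is empty). -/
noncomputable def segLen (μ : ℝ) (n : ℕ) (w : List Bool) : ℝ :=
  (MeasureTheory.volume (segType μ n w)).toReal

/-!
On a cylinder `{x | γ^n(x) = w}` the iterate `f^n` is affine with slope `±μ^n`, so it scales
Lebesgue measure by `μ^n`. Moreover `T(w b) = f(T(w) ∩ H)`, where `H`, the set of points from
which the next bit is `b`, lies on one side of `1/2`, so `f` is affine with slope `±μ` on `H`.
The covering hypothesis identifies the `f^i`-images of the two cylinders inside
`[x₀ - ε, x₀ + ε]` with `T(w)` and `T(w) ∩ H`; comparing the three measures gives the identity.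
-/

open scoped Pointwise

noncomputable def nextBit (b : Bool) (z : ℝ) : Bool :=
  if z < 1/2 then b else if 1/2 < z then !b else true

lemma nextBit_fiber_subset (c d : Bool) :
    {z : ℝ | nextBit c z = d} ⊆ Iic (1/2) ∨ {z : ℝ | nextBit c z = d} ⊆ Ici (1/2) := by
  by_cases hcd : c = d
  · refine .inl fun z (hz : nextBit c z = d) => mem_Iic.2 <| not_lt.1 fun hz' => ?_
    simp only [nextBit, if_neg (not_lt.2 hz'.le), if_pos hz'] at hz
    cases c <;> simp_all
  · refine .inr fun z (hz : nextBit c z = d) => mem_Ici.2 <| not_lt.1 fun hz' => hcd ?_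
    simpa only [nextBit, if_pos hz'] using hz

lemma volume_image_of_eqOn_affine {g : ℝ → ℝ} {s : Set ℝ} {a c : ℝ}
    (hg : EqOn g (fun x => a * x + c) s) :
    volume (g '' s) = ENNReal.ofReal |a| * volume s := by
  have hsmul : (fun x => a * x + c) '' s = (· + c) '' (a • s) := by
    rw [← image_smul, image_image]; rfl
  rw [hg.image_eq, hsmul]
  simp only [image_add_right, measure_preimage_add_right, Measure.addHaar_smul,
    Module.finrank_self, pow_one]

lemma tentMap_eqOn_nextBit_fiber (μ : ℝ) (c d : Bool) :
    ∃ a b : ℝ, |a| = |μ| ∧ EqOn (tentMap μ) (fun z => a * z + b) {z | nextBit c z = d} := by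
  rcases nextBit_fiber_subset c d with h | h
  · exact ⟨μ, 0, rfl, fun z hz => by simp only [tentMap, if_pos (mem_Iic.1 (h hz)), add_zero]⟩
  · refine ⟨-μ, μ, abs_neg μ, fun z hz => ?_⟩
    rcases (show (1:ℝ)/2 ≤ z from h hz).eq_or_lt with rfl | hz'
    · simp only [tentMap, le_refl, if_true]; ring
    · simp only [tentMap, if_neg (not_le.2 hz')]; ring

/-- With `getLastD false` the first bit is produced as if it were preceded by a `0`. -/
lemma tentCode_succ (μ : ℝ) (n : ℕ) (x : ℝ) :
    tentCode μ (n+1) x =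
      tentCode μ n x ++ [nextBit ((tentCode μ n x).getLastD false) ((tentMap μ)^[n] x)] := by
  simp only [tentCode, List.range_succ, List.map_append, List.map_cons, List.map_nil]
  congr 2
  cases n with
  | zero =>
    show (if 1/2 ≤ x then true else false) = nextBit false x
    unfold nextBit
    split_ifs <;> first | rfl | linarith
  | succ k =>
    rw [List.range_succ, List.map_append, List.map_singleton, List.getLastD_concat]
    rfl

lemma tentCode_succ_eq_append_iff {μ : ℝ} {n : ℕ} {x : ℝ} {w : List Bool} {d : Bool} :
    tentCode μ (n+1) x = w ++ [d] ↔
      tentCode μ n x = w ∧ nextBit (w.getLastD false) ((tentMap μ)^[n] x) = d := by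
  rw [tentCode_succ]
  constructor
  · intro h
    obtain ⟨hw, hd⟩ := List.append_inj' h rfl
    subst hw
    exact ⟨rfl, List.singleton_inj.1 hd⟩
  · rintro ⟨rfl, rfl⟩
    rfl

lemma sep_tentCode_succ_eq {μ : ℝ} (S : Set ℝ) (n : ℕ) (w : List Bool) (d : Bool) :
    {x ∈ S | tentCode μ (n+1) x = w ++ [d]} =
      {x ∈ S | tentCode μ n x = w} ∩
        (tentMap μ)^[n] ⁻¹' {z | nextBit (w.getLastD false) z = d} := by
  ext x
  simp only [mem_inter_iff, mem_preimage, mem_ofPred_eq, tentCode_succ_eq_append_iff]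
  tauto

lemma segType_eq_image {μ : ℝ} (n : ℕ) (w : List Bool) :
    segType μ n w = (tentMap μ)^[n] '' {x ∈ Ico (0:ℝ) 1 | tentCode μ n x = w} := by
  ext z
  simp only [segType, mem_ofPred_eq, mem_image, and_assoc]

lemma segType_append_singleton {μ : ℝ} (n : ℕ) (w : List Bool) (d : Bool) :
    segType μ (n+1) (w ++ [d]) =
      tentMap μ '' (segType μ n w ∩ {z | nextBit (w.getLastD false) z = d}) := by
  rw [segType_eq_image, sep_tentCode_succ_eq, Function.iterate_succ', image_comp,
    image_inter_preimage, ← segType_eq_image]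

lemma volume_segType_append_singleton {μ : ℝ} (n : ℕ) (w : List Bool) (d : Bool) :
    volume (segType μ (n+1) (w ++ [d])) =
      ENNReal.ofReal |μ| * volume (segType μ n w ∩ {z | nextBit (w.getLastD false) z = d}) := by
  obtain ⟨a, b, ha, hab⟩ := tentMap_eqOn_nextBit_fiber μ (w.getLastD false) d
  rw [segType_append_singleton, ← ha]
  exact volume_image_of_eqOn_affine (hab.mono inter_subset_right)

lemma exists_affine_iterate_on_cylinder (μ : ℝ) (n : ℕ) (y : ℝ) :
    ∃ a c : ℝ, |a| = |μ| ^ n ∧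
      EqOn (tentMap μ)^[n] (fun x => a * x + c) {x | tentCode μ n x = tentCode μ n y} := by
  induction n generalizing y with
  | zero => exact ⟨1, 0, by simp, fun x _ => by simp⟩
  | succ n ih =>
    obtain ⟨a, c, ha, hac⟩ := ih y
    set b := (tentCode μ n y).getLastD false
    obtain ⟨a', c', ha', hac'⟩ := tentMap_eqOn_nextBit_fiber μ b (nextBit b ((tentMap μ)^[n] y))
    refine ⟨a' * a, a' * c + c', by rw [abs_mul, ha, ha', pow_succ, mul_comm], fun x hx => ?_⟩
    rw [mem_ofPred_eq, tentCode_succ μ n y, tentCode_succ_eq_append_iff] at hx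
    rw [Function.iterate_succ_apply', hac' hx.2, hac hx.1]
    ring

lemma volume_image_iterate_of_subset_cylinder {μ : ℝ} {n : ℕ} {y : ℝ} {s : Set ℝ}
    (hs : s ⊆ {x | tentCode μ n x = tentCode μ n y}) :
    volume ((tentMap μ)^[n] '' s) = ENNReal.ofReal (|μ| ^ n) * volume s := by
  obtain ⟨a, c, ha, hac⟩ := exists_affine_iterate_on_cylinder μ n y
  rw [← ha]
  exact volume_image_of_eqOn_affine (hac.mono hs)

theorem tent_trans_prob_general (μ : ℝ) (hμ1 : 1 < μ)
    (x₀ ε : ℝ) (y : ℝ) (i : ℕ)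
    (hcov : (tentMap μ)^[i] ''
        {y' ∈ Set.Icc (x₀ - ε) (x₀ + ε) | tentCode μ i y' = tentCode μ i y} =
      segType μ i (tentCode μ i y)) :
    (volume {x' ∈ Set.Icc (x₀ - ε) (x₀ + ε) |
          tentCode μ (i+1) x' = tentCode μ (i+1) y}).toReal *
        (μ * segLen μ i (tentCode μ i y)) =
      (volume {x' ∈ Set.Icc (x₀ - ε) (x₀ + ε) |
          tentCode μ i x' = tentCode μ i y}).toReal *
        segLen μ (i+1) (tentCode μ (i+1) y) := by
  rw [tentCode_succ, sep_tentCode_succ_eq]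
  set w := tentCode μ i y
  set H := {z | nextBit (w.getLastD false) z = nextBit (w.getLastD false) ((tentMap μ)^[i] y)}
  set E := {x' ∈ Icc (x₀ - ε) (x₀ + ε) | tentCode μ i x' = w}
  have hE : E ⊆ {x | tentCode μ i x = w} := fun x hx => hx.2
  have hT : volume (segType μ i w) = ENNReal.ofReal (|μ| ^ i) * volume E := by
    rw [← hcov, volume_image_iterate_of_subset_cylinder hE]
  have hTH : volume (segType μ i w ∩ H) =
      ENNReal.ofReal (|μ| ^ i) * volume (E ∩ (tentMap μ)^[i] ⁻¹' H) := by
    rw [← hcov, ← image_inter_preimage,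
      volume_image_iterate_of_subset_cylinder (inter_subset_left.trans hE)]
  have hμ : 0 ≤ μ := zero_le_one.trans hμ1.le
  rw [segLen, segLen, volume_segType_append_singleton, hTH, hT, abs_of_nonneg hμ]
  simp only [ENNReal.toReal_mul, ENNReal.toReal_ofReal hμ, ENNReal.toReal_ofReal (pow_nonneg hμ i)]
  ring

/-- the conditional transition probability under full covering. -/
theorem tent_trans_prob (μ : ℝ) (hμ1 : 1 < μ) (hμ2 : μ < 2)
    (x₀ ε : ℝ) (hε : 0 < ε)
    (hsub : Set.Icc (x₀ - ε) (x₀ + ε) ⊆ Set.Ico (0:ℝ) 1)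
    (y : ℝ) (hy : y ∈ Set.Icc (x₀ - ε) (x₀ + ε)) (i : ℕ)
    (hcov : (tentMap μ)^[i] ''
        {y' ∈ Set.Icc (x₀ - ε) (x₀ + ε) | tentCode μ i y' = tentCode μ i y} =
      segType μ i (tentCode μ i y)) :
    (volume {x' ∈ Set.Icc (x₀ - ε) (x₀ + ε) |
          tentCode μ (i+1) x' = tentCode μ (i+1) y}).toReal *
        (μ * segLen μ i (tentCode μ i y)) =
      (volume {x' ∈ Set.Icc (x₀ - ε) (x₀ + ε) |
          tentCode μ i x' = tentCode μ i y}).toReal *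
        segLen μ (i+1) (tentCode μ (i+1) y) :=
  tent_trans_prob_general μ hμ1 x₀ ε y i hcov
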